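/- Let b : [0,∞) → (0,∞) be C¹ with b increasing, and suppose there exist q > 1 and constants c₁, c₂ > 0 such that c₁(s² + |s|^q) ≤ b(s²)s² ≤ c₂(s² + |s|^q) for all s ∈ ℝ. Then there exists a constant C > 0 such that for all x, y ∈ ℝ^N one has ⟨b(|x|²)x − b(|y|²)y, x − y⟩ ≥ C(|x − y|² + |x − y|^q). -/

import Mathlib

/-!
Writing `a = b(|x|²)`, `c = b(|y|²)`,
`⟨a x - c y, x - y⟩ = (a + c)/2 |x - y|² + (a - c)/2 (|x|² - |y|²)`, and the last term is
nonnegative because `b` is increasing. If `R = max(|x|, |y|)`, then `a + c ≥ b(R²)`,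
`|x - y| ≤ 2R`, and the lower growth bound gives `b(R²) ≥ c₁ (1 + R^(q-2))`, which dominates
`c₁ 2^(2-q) (1 + |x - y|^(q-2))` once one knows `q ≥ 2`. That last fact is also forced by the
growth bound: near `0` it reads `s^(q-2) ≤ b(1)/c₁`.
-/

open Set RealInnerProductSpace

lemma two_le_of_rpow_le_mul_sq {q M : ℝ} (h : ∀ s : ℝ, 0 < s → s ≤ 1 → s ^ q ≤ M * s ^ 2) :
    2 ≤ q := by
  by_contra! hq
  obtain ⟨s, hsM, hs0, hs1⟩ :=
    (((tendsto_rpow_neg_nhdsGT_zero (sub_neg.2 hq)).eventually_gt_atTop M).and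
      (Ioc_mem_nhdsGT zero_lt_one)).exists
  have hsplit : s ^ q = s ^ (q - 2) * s ^ 2 := by
    rw [← Real.rpow_natCast, ← Real.rpow_add hs0]; norm_num
  have := h s hs0 hs1
  rw [hsplit] at this
  nlinarith [pow_pos hs0 2]

lemma two_le_of_monotoneOn_of_mul_le {b : ℝ → ℝ} {q c : ℝ} (hb : MonotoneOn b (Ici 0))
    (hc : 0 < c) (hgrowth : ∀ s, 0 ≤ s → c * (s ^ 2 + s ^ q) ≤ b (s ^ 2) * s ^ 2) :
    2 ≤ q :=
  two_le_of_rpow_le_mul_sq (M := b 1 / c) fun s hs0 hs1 => by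
    have hb1 : b (s ^ 2) ≤ b 1 :=
      hb (mem_Ici.2 (sq_nonneg s)) (mem_Ici.2 zero_le_one) (pow_le_one₀ hs0.le hs1)
    have := hgrowth s hs0.le
    rw [div_mul_eq_mul_div, le_div_iff₀ hc]
    nlinarith [Real.rpow_nonneg hs0.le q, pow_pos hs0 2]

lemma mul_sq_add_rpow_le {q c β R d : ℝ} (hq : 2 ≤ q) (hc : 0 ≤ c) (hd : 0 ≤ d)
    (hdR : d ≤ 2 * R) (hβ : c * (R ^ 2 + R ^ q) ≤ β * R ^ 2) :
    c * (d ^ 2 + d ^ q) ≤ 2 ^ (q - 2) * β * d ^ 2 := by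
  rcases hd.eq_or_lt with rfl | hd
  · simp [Real.zero_rpow (by linarith : q ≠ 0)]
  have hR : 0 < R := by linarith
  have hsplit : ∀ s : ℝ, 0 < s → s ^ q = s ^ (q - 2) * s ^ 2 := fun s hs => by
    rw [← Real.rpow_natCast, ← Real.rpow_add hs]; norm_num
  have hβ' : c * (1 + R ^ (q - 2)) ≤ β := by
    rw [hsplit R hR] at hβ
    exact le_of_mul_le_mul_right (by linarith) (pow_pos hR 2)
  have hdq : d ^ (q - 2) ≤ 2 ^ (q - 2) * R ^ (q - 2) := by
    rw [← Real.mul_rpow zero_le_two hR.le]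
    exact Real.rpow_le_rpow hd.le hdR (by linarith)
  have h2 : 1 ≤ (2 : ℝ) ^ (q - 2) := Real.one_le_rpow one_le_two (by linarith)
  calc c * (d ^ 2 + d ^ q) = c * (1 + d ^ (q - 2)) * d ^ 2 := by rw [hsplit d hd]; ring
    _ ≤ c * (2 ^ (q - 2) * (1 + R ^ (q - 2))) * d ^ 2 := by gcongr; linarith
    _ = 2 ^ (q - 2) * (c * (1 + R ^ (q - 2))) * d ^ 2 := by ring
    _ ≤ 2 ^ (q - 2) * β * d ^ 2 := by gcongr

section InnerProductSpace

variable {E : Type*} [NormedAddCommGroup E] [InnerProductSpace ℝ E]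

lemma inner_smul_sub_smul_sub_eq (a c : ℝ) (x y : E) :
    ⟪a • x - c • y, x - y⟫ =
      (a + c) / 2 * ‖x - y‖ ^ 2 + (a - c) / 2 * (‖x‖ ^ 2 - ‖y‖ ^ 2) := by
  simp only [inner_sub_left, inner_sub_right, real_inner_smul_left, real_inner_self_eq_norm_sq,
    norm_sub_sq_real, real_inner_comm y x]
  ring

lemma add_div_two_mul_norm_sub_sq_le_inner {b : ℝ → ℝ} (hb : MonotoneOn b (Ici 0)) (x y : E) :
    (b (‖x‖ ^ 2) + b (‖y‖ ^ 2)) / 2 * ‖x - y‖ ^ 2 ≤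
      ⟪b (‖x‖ ^ 2) • x - b (‖y‖ ^ 2) • y, x - y⟫ := by
  have hmono : 0 ≤ (b (‖x‖ ^ 2) - b (‖y‖ ^ 2)) * (‖x‖ ^ 2 - ‖y‖ ^ 2) := by
    have hx : ‖x‖ ^ 2 ∈ Ici (0 : ℝ) := mem_Ici.2 (sq_nonneg _)
    have hy : ‖y‖ ^ 2 ∈ Ici (0 : ℝ) := mem_Ici.2 (sq_nonneg _)
    rcases le_total (‖x‖ ^ 2) (‖y‖ ^ 2) with h | h
    · exact mul_nonneg_of_nonpos_of_nonpos (sub_nonpos.2 (hb hx hy h)) (sub_nonpos.2 h)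
    · exact mul_nonneg (sub_nonneg.2 (hb hy hx h)) (sub_nonneg.2 h)
  rw [inner_smul_sub_smul_sub_eq]
  linarith

end InnerProductSpace

theorem stmt_0_general (N : ℕ) (b : ℝ → ℝ)
    (hbpos : ∀ s : ℝ, 0 ≤ s → 0 < b s)
    (hbmono : MonotoneOn b (Set.Ici 0))
    (q c₁ c₂ : ℝ) (hc₁ : 0 < c₁)
    (hgrowth : ∀ s : ℝ, c₁ * (s ^ 2 + |s| ^ q) ≤ b (s ^ 2) * s ^ 2 ∧
      b (s ^ 2) * s ^ 2 ≤ c₂ * (s ^ 2 + |s| ^ q)) :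
    ∃ C : ℝ, 0 < C ∧ ∀ x y : EuclideanSpace ℝ (Fin N),
      C * (‖x - y‖ ^ 2 + ‖x - y‖ ^ q) ≤
        inner ℝ (b (‖x‖ ^ 2) • x - b (‖y‖ ^ 2) • y) (x - y) := by
  have hlower : ∀ s, 0 ≤ s → c₁ * (s ^ 2 + s ^ q) ≤ b (s ^ 2) * s ^ 2 := fun s hs => by
    simpa only [abs_of_nonneg hs] using (hgrowth s).1
  have hq : 2 ≤ q := two_le_of_monotoneOn_of_mul_le hbmono hc₁ hlower
  have hlarger : ∀ x y : EuclideanSpace ℝ (Fin N), ‖y‖ ≤ ‖x‖ →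
      c₁ * (‖x - y‖ ^ 2 + ‖x - y‖ ^ q) ≤ 2 ^ (q - 2) * b (‖x‖ ^ 2) * ‖x - y‖ ^ 2 :=
    fun x y h => mul_sq_add_rpow_le hq hc₁.le (norm_nonneg _)
      (by linarith [norm_sub_le x y]) (hlower _ (norm_nonneg x))
  refine ⟨c₁ / (2 * 2 ^ (q - 2)), by positivity, fun x y => ?_⟩
  have hsum : c₁ * (‖x - y‖ ^ 2 + ‖x - y‖ ^ q) ≤
      2 ^ (q - 2) * (b (‖x‖ ^ 2) + b (‖y‖ ^ 2)) * ‖x - y‖ ^ 2 := by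
    have hx := hbpos (‖x‖ ^ 2) (sq_nonneg _)
    have hy := hbpos (‖y‖ ^ 2) (sq_nonneg _)
    rcases le_total ‖y‖ ‖x‖ with h | h
    · calc _ ≤ 2 ^ (q - 2) * b (‖x‖ ^ 2) * ‖x - y‖ ^ 2 := hlarger x y h
        _ ≤ _ := by gcongr; linarith
    · calc _ ≤ 2 ^ (q - 2) * b (‖y‖ ^ 2) * ‖x - y‖ ^ 2 := norm_sub_rev x y ▸ hlarger y x h
        _ ≤ _ := by gcongr; linarith
  calc c₁ / (2 * 2 ^ (q - 2)) * (‖x - y‖ ^ 2 + ‖x - y‖ ^ q)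
      ≤ (b (‖x‖ ^ 2) + b (‖y‖ ^ 2)) / 2 * ‖x - y‖ ^ 2 := by
        rw [div_mul_eq_mul_div, div_le_iff₀ (by positivity)]
        linarith
    _ ≤ _ := add_div_two_mul_norm_sub_sq_le_inner hbmono x y

/-- If b : [0,∞) → (0,∞) is C¹ (continuous at 0), increasing, and satisfies
c₁(s² + |s|^q) ≤ b(s²)s² ≤ c₂(s² + |s|^q) for some q > 1 and c₁, c₂ > 0, then there is
C > 0 with ⟨b(|x|²)x − b(|y|²)y, x − y⟩ ≥ C(|x−y|² + |x−y|^q) for all x, y ∈ ℝ^N. -/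
theorem stmt_0 (N : ℕ) (hN : 1 ≤ N) (b : ℝ → ℝ)
    (hbpos : ∀ s : ℝ, 0 ≤ s → 0 < b s)
    (hbC1 : ContDiffOn ℝ 1 b (Set.Ioi 0)) (hbcont : ContinuousOn b (Set.Ici 0))
    (hbmono : MonotoneOn b (Set.Ici 0))
    (q c₁ c₂ : ℝ) (hq : 1 < q) (hc₁ : 0 < c₁) (hc₂ : 0 < c₂)
    (hgrowth : ∀ s : ℝ, c₁ * (s ^ 2 + |s| ^ q) ≤ b (s ^ 2) * s ^ 2 ∧
      b (s ^ 2) * s ^ 2 ≤ c₂ * (s ^ 2 + |s| ^ q)) :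
    ∃ C : ℝ, 0 < C ∧ ∀ x y : EuclideanSpace ℝ (Fin N),
      C * (‖x - y‖ ^ 2 + ‖x - y‖ ^ q) ≤
        inner ℝ (b (‖x‖ ^ 2) • x - b (‖y‖ ^ 2) • y) (x - y) :=
  stmt_0_general N b hbpos hbmono q c₁ c₂ hc₁ hgrowth
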